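/- Let u be a factor of the Thue-Morse word 𝕋 which is neither a prefix of 𝕋 nor a prefix of 𝕋̄. Then there exists a nonnegative integer k such that one of the following holds: (1) every x ∈ 𝕋|_u satisfies x ≡ 2^k (mod 2^{k+1}) (its binary expansion ends in 10^k); or (2) every x ∈ 𝕋|_u satisfies x mod 2^{k+2} ∈ {3·2^k, 2^{k+1}} (its binary expansion ends in 110^k or in 10^{k+1}), both residues actually occur among elements of 𝕋|_u, and u is a prefix of τ^n(aba) for some n ≥ 0 and some pair of distinct letters a, b ∈ {0,1}. -/
import Mathlib

/-- The Thue-Morse word: `TM n` is the sum modulo 2 of the binary digits of `n`. -/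
def TM (n : ℕ) : ℕ := (Nat.digits 2 n).sum % 2

/-- The set of occurrences of the finite word `u` in the Thue-Morse word. -/
def TMocc (u : List ℕ) : Set ℕ :=
  {n | u = (List.range u.length).map fun j => TM (n + j)}

/-- `u` is a factor of the Thue-Morse word. -/
def FactorTM (u : List ℕ) : Prop := (TMocc u).Nonempty

/-- `u` is a prefix of the Thue-Morse word. -/
def PrefixTM (u : List ℕ) : Prop := u = (List.range u.length).map TM

/-- `u` is a prefix of the complement of the Thue-Morse word. -/
def PrefixTMBar (u : List ℕ) : Prop :=
  u = (List.range u.length).map fun j => 1 - TM j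

/-- The Thue-Morse morphism `0 ↦ 01`, `1 ↦ 10` extended to words. -/
def tau (w : List ℕ) : List ℕ := w.flatMap fun a => [a, 1 - a]

section TMlemmas

lemma TM_zero : TM 0 = 0 := by simp [TM]
lemma TM_le_one (n : ℕ) : TM n ≤ 1 := Nat.lt_succ_iff.mp (Nat.mod_lt _ (by norm_num))
lemma TM_two_mul (n : ℕ) : TM (2 * n) = TM n := by
  rcases Nat.eq_zero_or_pos n with h | h
  · simp [h]
  · unfold TM
    rw [Nat.digits_def' (by norm_num : (1:ℕ) < 2) (by omega)]
    simp [Nat.mul_div_cancel_left _ (by norm_num : (0:ℕ) < 2), Nat.mul_mod_right]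
lemma TM_two_mul_add_one (n : ℕ) : TM (2 * n + 1) = 1 - TM n := by
  unfold TM
  rw [Nat.digits_def' (by norm_num : (1:ℕ) < 2) (by omega)]
  have : (2 * n + 1) % 2 = 1 := by omega
  have h2 : (2 * n + 1) / 2 = n := by omega
  rw [this, h2]
  have := Nat.mod_lt (Nat.digits 2 n).sum (show 0 < 2 by norm_num)
  simp [List.sum_cons, Nat.add_mod]
  omega
lemma TM_ne (m : ℕ) : TM (2 * m) ≠ TM (2 * m + 1) := by
  rw [TM_two_mul, TM_two_mul_add_one]
  have := TM_le_one m; omega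

lemma TM_one : TM 1 = 1 := by
  rw [show (1:ℕ) = 2*0+1 by norm_num, TM_two_mul_add_one, TM_zero]
lemma TM_two : TM 2 = 1 := by
  rw [show (2:ℕ) = 2*1 by norm_num, TM_two_mul, TM_one]
lemma TM_three : TM 3 = 0 := by
  rw [show (3:ℕ) = 2*1+1 by norm_num, TM_two_mul_add_one, TM_one]
lemma TM_four : TM 4 = 1 := by
  rw [show (4:ℕ) = 2*2 by norm_num, TM_two_mul, TM_two]
lemma TM_five : TM 5 = 0 := by
  rw [show (5:ℕ) = 2*2+1 by norm_num, TM_two_mul_add_one, TM_two]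
lemma TM_six : TM 6 = 0 := by
  rw [show (6:ℕ) = 2*3 by norm_num, TM_two_mul, TM_three]
lemma TM_ten : TM 10 = 0 := by
  rw [show (10:ℕ) = 2*5 by norm_num, TM_two_mul, TM_five]
lemma TM_eleven : TM 11 = 1 := by
  rw [show (11:ℕ) = 2*5+1 by norm_num, TM_two_mul_add_one, TM_five]
lemma TM_twelve : TM 12 = 0 := by
  rw [show (12:ℕ) = 2*6 by norm_num, TM_two_mul, TM_six]
lemma TM_thirteen : TM 13 = 1 := by
  rw [show (13:ℕ) = 2*6+1 by norm_num, TM_two_mul_add_one, TM_six]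

end TMlemmas

section OccLemmas

lemma mem_TMocc {u : List ℕ} {x : ℕ} :
    x ∈ TMocc u ↔ ∀ j (h : j < u.length), u[j] = TM (x + j) := by
  constructor
  · intro h j hj
    rw [List.getElem_of_eq h hj]
    simp
  · intro h
    show u = _
    apply List.ext_getElem (by simp)
    intro j h1 h2
    simpa using h j h1

lemma prefixTM_iff {u : List ℕ} : PrefixTM u ↔ 0 ∈ TMocc u := by
  unfold PrefixTM TMocc
  simp

lemma prefixTMBar_iff {u : List ℕ} :
    PrefixTMBar u ↔ ∀ j (h : j < u.length), u[j] = 1 - TM j := by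
  constructor
  · intro h j hj
    rw [List.getElem_of_eq h hj]
    simp
  · intro h
    apply List.ext_getElem (by simp)
    intro j h1 h2
    simpa using h j h1

lemma odd_occ {x : ℕ} (h : TM x = TM (x + 1)) : x % 2 = 1 := by
  rcases Nat.even_or_odd x with he | ho
  · obtain ⟨m, hm⟩ := he
    have e : x = 2*m := by omega
    rw [e] at h
    exact absurd h (TM_ne m)
  · exact Nat.odd_iff.mp ho

lemma occ_aba {x a : ℕ} (ha : a ≤ 1) (h0 : TM x = a) (h1 : TM (x+1) = 1 - a)
    (h2 : TM (x+2) = a) : x % 4 = 3 ∨ x % 4 = 2 := by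
  rcases Nat.even_or_odd x with he | ho
  · obtain ⟨m, hm⟩ := he
    have e : x = 2*m := by omega
    subst e
    rw [TM_two_mul] at h0
    rw [show 2*m+2 = 2*(m+1) by ring, TM_two_mul] at h2
    have hmo : m % 2 = 1 := odd_occ (by rw [h0, h2])
    omega
  · obtain ⟨m, hm⟩ := ho
    subst hm
    rw [TM_two_mul_add_one] at h0
    rw [show 2*m+1+1 = 2*(m+1) by ring, TM_two_mul] at h1
    have hb := TM_le_one m
    have hm1 : TM m = TM (m+1) := by omega
    have := odd_occ hm1
    omega

end OccLemmas

section TauLemmas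

lemma tau_cons (a : ℕ) (w : List ℕ) : tau (a :: w) = a :: (1 - a) :: tau w := by
  simp [tau]

lemma tau_length (w : List ℕ) : (tau w).length = 2 * w.length := by
  induction w with
  | nil => rfl
  | cons a w ih => rw [tau_cons]; simp at *; omega

lemma tau_getElem_even (w : List ℕ) (i : ℕ) (h : i < w.length) :
    (tau w)[2 * i]'(by rw [tau_length]; omega) = w[i] := by
  induction w generalizing i with
  | nil => simp at h
  | cons a w ih =>
    rcases i with _ | i
    · simp [tau_cons]
    · have h' : i < w.length := by simpa using h
      have : 2 * (i + 1) = (2 * i + 1) + 1 := by ring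
      simp only [tau_cons, this, List.getElem_cons_succ]
      exact ih i h'

lemma tau_getElem_odd (w : List ℕ) (i : ℕ) (h : i < w.length) :
    (tau w)[2 * i + 1]'(by rw [tau_length]; omega) = 1 - w[i] := by
  induction w generalizing i with
  | nil => simp at h
  | cons a w ih =>
    rcases i with _ | i
    · simp [tau_cons]
    · have h' : i < w.length := by simpa using h
      have : 2 * (i + 1) + 1 = (2 * i + 1 + 1) + 1 := by ring
      simp only [tau_cons, this, List.getElem_cons_succ]
      exact ih i h'

lemma tau_prefix_mono {v w : List ℕ} (h : v <+: w) : tau v <+: tau w := by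
  obtain ⟨s, rfl⟩ := h
  exact ⟨tau s, (List.flatMap_append ..).symm⟩

lemma prefix_tau_of {u v : List ℕ} (hL : u.length ≤ 2 * v.length)
    (he : ∀ i, (h : 2 * i < u.length) → (h2 : i < v.length) → u[2 * i] = v[i])
    (ho : ∀ i, (h : 2 * i + 1 < u.length) → (h2 : i < v.length) → u[2 * i + 1] = 1 - v[i]) :
    u <+: tau v := by
  rw [List.prefix_iff_eq_take]
  apply List.ext_getElem (by simp [tau_length]; omega)
  intro j h1 h2
  rw [List.getElem_take]
  rcases Nat.even_or_odd j with ⟨i, hi⟩ | ⟨i, hi⟩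
  · have hiv : i < v.length := by omega
    have hj : j = 2 * i := by omega
    clear hi; subst hj
    rw [tau_getElem_even v i hiv]
    exact he i h1 hiv
  · have hiv : i < v.length := by omega
    subst hi
    rw [tau_getElem_odd v i hiv]
    exact ho i h1 hiv

end TauLemmas

set_option maxHeartbeats 2000000 in
lemma tm_aux : ∀ N (u : List ℕ), u.length ≤ N → FactorTM u → ¬PrefixTM u → ¬PrefixTMBar u →
    ∃ k : ℕ,
      (∀ x ∈ TMocc u, x % 2 ^ (k + 1) = 2 ^ k) ∨
      ((∀ x ∈ TMocc u, x % 2 ^ (k + 2) = 3 * 2 ^ k ∨ x % 2 ^ (k + 2) = 2 ^ (k + 1)) ∧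
        (∃ x ∈ TMocc u, x % 2 ^ (k + 2) = 3 * 2 ^ k) ∧
        (∃ x ∈ TMocc u, x % 2 ^ (k + 2) = 2 ^ (k + 1)) ∧
        ∃ n a b : ℕ, ((a = 0 ∧ b = 1) ∨ (a = 1 ∧ b = 0)) ∧
          u <+: tau^[n] [a, b, a]) := by
  intro N
  induction N with
  | zero =>
    intro u hlen _ h1 _
    have : u = [] := List.length_eq_zero_iff.mp (by omega)
    subst this
    exact absurd (by simp [PrefixTM]) h1
  | succ N ih =>
    intro u hlen hfac h1 h2
    obtain ⟨x₀, hx₀⟩ := hfac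
    have hx := mem_TMocc.mp hx₀
    by_cases h4 : 4 ≤ u.length
    · -- inductive step
      by_cases hev : ∃ y, 2 * y ∈ TMocc u
      · obtain ⟨y₀, hy₀⟩ := hev
        have hyj := mem_TMocc.mp hy₀
        have hue : ∀ i, (h : 2*i < u.length) → u[2*i] = TM (y₀ + i) := by
          intro i h
          rw [hyj _ h, show 2*y₀ + 2*i = 2*(y₀+i) by ring, TM_two_mul]
        have huo : ∀ i, (h : 2*i+1 < u.length) → u[2*i+1] = 1 - TM (y₀ + i) := by
          intro i h
          rw [hyj _ h, show 2*y₀ + (2*i+1) = 2*(y₀+i)+1 by ring, TM_two_mul_add_one]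
        obtain ⟨v, hv⟩ : ∃ v : List ℕ, v = (List.range ((u.length + 1) / 2)).map (fun i => TM (y₀ + i)) := ⟨_, rfl⟩
        have hvlen : v.length = (u.length + 1) / 2 := by rw [hv]; simp
        have hvget : ∀ i, (h : i < v.length) → v[i] = TM (y₀ + i) := by
          intro i h
          have h2 : i < ((List.range ((u.length + 1) / 2)).map (fun i => TM (y₀ + i))).length := by
            simpa [← hv] using h
          rw [List.getElem_of_eq hv h]
          simp
        have hvocc : y₀ ∈ TMocc v := by
          apply mem_TMocc.mpr
          intro j hj
          exact hvget j hj
        -- correspondence between occurrences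
        have hF2b : ∀ y, y ∈ TMocc v → 2*y ∈ TMocc u := by
          intro y hy
          have hyv := mem_TMocc.mp hy
          apply mem_TMocc.mpr
          intro j hj
          rcases Nat.even_or_odd j with hj2 | hj2
          · obtain ⟨i, hi⟩ := hj2
            have e : j = 2*i := by omega
            clear hi; subst e
            have hiv : i < v.length := by rw [hvlen]; omega
            rw [hue i hj, show 2*y + 2*i = 2*(y+i) by ring, TM_two_mul]
            have h5 := hyv i hiv
            rw [hvget i hiv] at h5
            exact h5
          · obtain ⟨i, hi⟩ := hj2
            subst hi
            have hiv : i < v.length := by rw [hvlen]; omega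
            rw [huo i hj, show 2*y + (2*i+1) = 2*(y+i)+1 by ring, TM_two_mul_add_one]
            have h5 := hyv i hiv
            rw [hvget i hiv] at h5
            rw [h5]
        have hF2f : ∀ y, 2*y ∈ TMocc u → y ∈ TMocc v := by
          intro y hy
          have hyu := mem_TMocc.mp hy
          apply mem_TMocc.mpr
          intro i hi
          rw [hvget i hi]
          have h2i : 2*i < u.length := by rw [hvlen] at hi; omega
          have e1 := (hue i h2i).symm.trans (hyu (2*i) h2i)
          rwa [show 2*y+2*i = 2*(y+i) by ring, TM_two_mul] at e1
        -- all occurrences are even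
        have hall_even : ∀ x ∈ TMocc u, x % 2 = 0 := by
          intro x hxx
          rcases Nat.even_or_odd x with he | ho
          · exact Nat.even_iff.mp he
          · exfalso
            obtain ⟨m, hm⟩ := ho
            subst hm
            have hl0 : 0 < u.length := by omega
            have hl1 : 1 < u.length := by omega
            have hl2 : 2 < u.length := by omega
            have hl3 : 3 < u.length := by omega
            have hle : 2*0 < u.length := hl0
            have hle1 : 2*1 < u.length := hl2
            have hlo : 2*0+1 < u.length := hl1
            have hlo1 : 2*1+1 < u.length := hl3
            have hxu := mem_TMocc.mp hxx
            have a0 : u[0]'hl0 = TM y₀ := by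
              have := hue 0 hle; simpa using this
            have a1 : u[1]'hl1 = 1 - TM y₀ := by
              have := huo 0 hlo; simpa using this
            have a2 : u[2]'hl2 = TM (y₀+1) := by
              have := hue 1 hle1; simpa using this
            have a3 : u[3]'hl3 = 1 - TM (y₀+1) := by
              have := huo 1 hlo1; simpa using this
            have b0 : u[0]'hl0 = 1 - TM m := by
              have := hxu 0 hl0
              rw [show 2*m+1+0 = 2*m+1 by ring, TM_two_mul_add_one] at this
              exact this
            have b1 : u[1]'hl1 = TM (m+1) := by
              have := hxu 1 hl1
              rw [show 2*m+1+1 = 2*(m+1) by ring, TM_two_mul] at this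
              exact this
            have b2 : u[2]'hl2 = 1 - TM (m+1) := by
              have := hxu 2 hl2
              rw [show 2*m+1+2 = 2*(m+1)+1 by ring, TM_two_mul_add_one] at this
              exact this
            have b3 : u[3]'hl3 = TM (m+2) := by
              have := hxu 3 hl3
              rw [show 2*m+1+3 = 2*(m+2) by ring, TM_two_mul] at this
              exact this
            have c0 := TM_le_one y₀
            have c1 := TM_le_one (y₀+1)
            have c2 := TM_le_one m
            have c3 := TM_le_one (m+1)
            have c4 := TM_le_one (m+2)
            rcases Nat.even_or_odd m with he2 | ho2
            · obtain ⟨j, hj⟩ := he2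
              have hne : TM m ≠ TM (m+1) := by
                have := TM_ne j
                have e2 : 2*j+1 = m+1 := by omega
                have e1 : 2*j = m := by omega
                rwa [e2, e1] at this
              omega
            · obtain ⟨j, hj⟩ := ho2
              have hne : TM (m+1) ≠ TM (m+2) := by
                have := TM_ne (j+1)
                have e2 : 2*(j+1)+1 = m+2 := by omega
                have e1 : 2*(j+1) = m+1 := by omega
                rwa [e2, e1] at this
              omega
        -- hypotheses for v
        have hvfac : FactorTM v := ⟨y₀, hvocc⟩
        have hnp1 : ¬ PrefixTM v := by
          intro hp
          apply h1
          apply prefixTM_iff.mpr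
          have := hF2b 0 (prefixTM_iff.mp hp)
          simpa using this
        have hnp2 : ¬ PrefixTMBar v := by
          intro hp
          apply h2
          have hpv := prefixTMBar_iff.mp hp
          apply prefixTMBar_iff.mpr
          intro j hj
          rcases Nat.even_or_odd j with hj2 | hj2
          · obtain ⟨i, hi⟩ := hj2
            have e : j = 2*i := by omega
            clear hi; subst e
            have hiv : i < v.length := by rw [hvlen]; omega
            have hq := hpv i hiv
            rw [hvget i hiv] at hq
            rw [hue i hj, hq, TM_two_mul]
          · obtain ⟨i, hi⟩ := hj2
            subst hi
            have hiv : i < v.length := by rw [hvlen]; omega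
            have hq := hpv i hiv
            rw [hvget i hiv] at hq
            rw [huo i hj, hq, TM_two_mul_add_one]
        have hvle : v.length ≤ N := by rw [hvlen]; omega
        obtain ⟨k, hk⟩ := ih v hvle hvfac hnp1 hnp2
        have hsplit : ∀ x ∈ TMocc u, ∃ y, x = 2*y ∧ y ∈ TMocc v := by
          intro x hxx
          have hxe := hall_even x hxx
          refine ⟨x/2, by omega, hF2f (x/2) ?_⟩
          rw [show 2*(x/2) = x by omega]
          exact hxx
        have hupre : u <+: tau v := by
          apply prefix_tau_of
          · rw [hvlen]; omega
          · intro i h hiv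
            rw [hue i h, hvget i hiv]
          · intro i h hiv
            rw [huo i h, hvget i hiv]
        rcases hk with hk | ⟨hk1, ⟨ye, hye, hye2⟩, ⟨yo, hyo, hyo2⟩, n, a, b, hab, hpre⟩
        · refine ⟨k+1, Or.inl ?_⟩
          intro x hxx
          obtain ⟨y, rfl, hyv⟩ := hsplit x hxx
          rw [show 2^(k+1+1) = 2*2^(k+1) by ring, Nat.mul_mod_mul_left, hk y hyv]
          ring
        · refine ⟨k+1, Or.inr ⟨?_, ⟨2*ye, hF2b ye hye, ?_⟩, ⟨2*yo, hF2b yo hyo, ?_⟩,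
            n+1, a, b, hab, ?_⟩⟩
          · intro x hxx
            obtain ⟨y, rfl, hyv⟩ := hsplit x hxx
            rcases hk1 y hyv with h | h
            · left
              rw [show 2^(k+1+2) = 2*2^(k+2) by ring, Nat.mul_mod_mul_left, h]
              ring
            · right
              rw [show 2^(k+1+2) = 2*2^(k+2) by ring, Nat.mul_mod_mul_left, h]
              ring
          · rw [show 2^(k+1+2) = 2*2^(k+2) by ring, Nat.mul_mod_mul_left, hye2]
            ring
          · rw [show 2^(k+1+2) = 2*2^(k+2) by ring, Nat.mul_mod_mul_left, hyo2]
            ring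
          · rw [Function.iterate_succ_apply']
            exact hupre.trans (tau_prefix_mono hpre)
      · refine ⟨0, Or.inl ?_⟩
        intro x hxx
        rcases Nat.even_or_odd x with he | ho
        · exfalso
          obtain ⟨m, hm⟩ := he
          exact hev ⟨m, by rwa [show 2*m = x by omega]⟩
        · simpa using Nat.odd_iff.mp ho
    · -- short words
      rcases u with _ | ⟨a, _ | ⟨b, _ | ⟨c, _ | ⟨d, t⟩⟩⟩⟩
      · exact absurd (by simp [PrefixTM]) h1
      · -- length 1
        have e0 : a = TM x₀ := by simpa using hx 0 (by simp)
        have ha : a ≤ 1 := by rw [e0]; exact TM_le_one _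
        interval_cases a
        · exact absurd (by simp [PrefixTM, List.range_succ, TM_zero]) h1
        · exact absurd (by simp [PrefixTMBar, List.range_succ, TM_zero]) h2
      · -- length 2
        have e0 : a = TM x₀ := by simpa using hx 0 (by simp)
        have e1 : b = TM (x₀ + 1) := by simpa using hx 1 (by simp)
        have ha : a ≤ 1 := by rw [e0]; exact TM_le_one _
        have hb : b ≤ 1 := by rw [e1]; exact TM_le_one _
        interval_cases a <;> interval_cases b
        · -- [0,0]
          refine ⟨0, Or.inl ?_⟩
          intro x hxx
          have f0 := mem_TMocc.mp hxx 0 (by simp)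
          have f1 := mem_TMocc.mp hxx 1 (by simp)
          simp at f0 f1
          have : TM x = TM (x+1) := by omega
          simpa using odd_occ this
        · exact absurd (by simp [PrefixTM, List.range_succ, TM_zero, TM_one]) h1
        · exact absurd (by simp [PrefixTMBar, List.range_succ, TM_zero, TM_one]) h2
        · -- [1,1]
          refine ⟨0, Or.inl ?_⟩
          intro x hxx
          have f0 := mem_TMocc.mp hxx 0 (by simp)
          have f1 := mem_TMocc.mp hxx 1 (by simp)
          simp at f0 f1
          have : TM x = TM (x+1) := by omega
          simpa using odd_occ this
      · -- length 3
        have e0 : a = TM x₀ := by simpa using hx 0 (by simp)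
        have e1 : b = TM (x₀ + 1) := by simpa using hx 1 (by simp)
        have e2 : c = TM (x₀ + 2) := by simpa using hx 2 (by simp)
        have ha : a ≤ 1 := by rw [e0]; exact TM_le_one _
        have hb : b ≤ 1 := by rw [e1]; exact TM_le_one _
        have hc : c ≤ 1 := by rw [e2]; exact TM_le_one _
        have hlet : ∀ x, x ∈ TMocc [a,b,c] →
            TM x = a ∧ TM (x+1) = b ∧ TM (x+2) = c := by
          intro x hxx
          have f0 := mem_TMocc.mp hxx 0 (by simp)
          have f1 := mem_TMocc.mp hxx 1 (by simp)
          have f2 := mem_TMocc.mp hxx 2 (by simp)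
          simp at f0 f1 f2
          omega
        interval_cases a <;> interval_cases b <;> interval_cases c
        · -- [0,0,0]
          exfalso
          obtain ⟨g0, g1, g2⟩ := hlet x₀ hx₀
          have o1 := odd_occ (x := x₀) (by omega)
          have o2 := odd_occ (x := x₀ + 1) (show TM (x₀+1) = TM (x₀+2) by omega)
          omega
        · -- [0,0,1]
          refine ⟨0, Or.inl ?_⟩
          intro x hxx
          obtain ⟨g0, g1, g2⟩ := hlet x hxx
          have := odd_occ (x := x) (by omega)
          simpa using this
        · -- [0,1,0]
          refine ⟨0, Or.inr ⟨?_, ⟨3, ?_, by norm_num⟩, ⟨10, ?_, by norm_num⟩,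
            0, 0, 1, Or.inl ⟨rfl, rfl⟩, by simp⟩⟩
          · intro x hxx
            obtain ⟨g0, g1, g2⟩ := hlet x hxx
            have := occ_aba (x := x) (a := 0) (by norm_num) g0 (by simpa using g1) g2
            simpa using this
          · apply mem_TMocc.mpr
            intro j hj
            simp at hj
            interval_cases j <;> norm_num [TM_three, TM_four, TM_five]
          · apply mem_TMocc.mpr
            intro j hj
            simp at hj
            interval_cases j <;> norm_num [TM_ten, TM_eleven, TM_twelve]
        · exact absurd (by simp [PrefixTM, List.range_succ, TM_zero, TM_one, TM_two]) h1
        · exact absurd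
            (by simp [PrefixTMBar, List.range_succ, TM_zero, TM_one, TM_two]) h2
        · -- [1,0,1]
          refine ⟨0, Or.inr ⟨?_, ⟨11, ?_, by norm_num⟩, ⟨2, ?_, by norm_num⟩,
            0, 1, 0, Or.inr ⟨rfl, rfl⟩, by simp⟩⟩
          · intro x hxx
            obtain ⟨g0, g1, g2⟩ := hlet x hxx
            have := occ_aba (x := x) (a := 1) (by norm_num) g0 (by simpa using g1) g2
            simpa using this
          · apply mem_TMocc.mpr
            intro j hj
            simp at hj
            interval_cases j <;> norm_num [TM_eleven, TM_twelve, TM_thirteen]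
          · apply mem_TMocc.mpr
            intro j hj
            simp at hj
            interval_cases j <;> norm_num [TM_two, TM_three, TM_four]
        · -- [1,1,0]
          refine ⟨0, Or.inl ?_⟩
          intro x hxx
          obtain ⟨g0, g1, g2⟩ := hlet x hxx
          have := odd_occ (x := x) (by omega)
          simpa using this
        · -- [1,1,1]
          exfalso
          obtain ⟨g0, g1, g2⟩ := hlet x₀ hx₀
          have o1 := odd_occ (x := x₀) (by omega)
          have o2 := odd_occ (x := x₀ + 1) (show TM (x₀+1) = TM (x₀+2) by omega)
          omega
      · exact absurd (by simp) h4

/-- If `u` is a factor of the Thue-Morse word which is neither a prefix of `𝕋`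
nor of `𝕋̄`, then there is a `k ≥ 0` such that either every occurrence of `u`
has binary expansion ending in `10^k`, or every occurrence ends in `110^k` or
`10^{k+1}`, both cases occur, and `u` is a prefix of `τ^n(aba)` for distinct
letters `a, b`. -/
theorem tm_factor_occurrence_endings (u : List ℕ) (hfac : FactorTM u)
    (h1 : ¬ PrefixTM u) (h2 : ¬ PrefixTMBar u) :
    ∃ k : ℕ,
      (∀ x ∈ TMocc u, x % 2 ^ (k + 1) = 2 ^ k) ∨
      ((∀ x ∈ TMocc u, x % 2 ^ (k + 2) = 3 * 2 ^ k ∨ x % 2 ^ (k + 2) = 2 ^ (k + 1)) ∧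
        (∃ x ∈ TMocc u, x % 2 ^ (k + 2) = 3 * 2 ^ k) ∧
        (∃ x ∈ TMocc u, x % 2 ^ (k + 2) = 2 ^ (k + 1)) ∧
        ∃ n a b : ℕ, ((a = 0 ∧ b = 1) ∨ (a = 1 ∧ b = 0)) ∧
          u <+: tau^[n] [a, b, a]) :=
  tm_aux u.length u le_rfl hfac h1 h2
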